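/- arXiv:1110.2197 — 4 statements merged into one kernel-verified Lean document; each statement's English description precedes it below -/
import Mathlib

section
/- Let F ∈ ℂ[x₀,…,xₙ] be homogeneous of degree d and write F = x₀^e · H where H is homogeneous of degree d − e ≥ 1 and x₀ does not divide H. If G ∈ ℂ[y₀,…,yₙ] is homogeneous of degree d − e and G(∂/∂x₀,…,∂/∂xₙ)(x₀^{d-e}·H) = 0, then G(∂/∂x₀,…,∂/∂xₙ)(x₀^{d-e}) = 0. -/
open MvPolynomial

noncomputable def diffOpMonomial {m : ℕ} (α : Fin m →₀ ℕ) :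
    MvPolynomial (Fin m) ℂ →ₗ[ℂ] MvPolynomial (Fin m) ℂ :=
  ((List.finRange m).map fun i =>
    ((pderiv (R := ℂ) i).toLinearMap) ^ (α i)).prod

noncomputable def diffAct {m : ℕ} :
    MvPolynomial (Fin m) ℂ →ₗ[ℂ] (MvPolynomial (Fin m) ℂ →ₗ[ℂ] MvPolynomial (Fin m) ℂ) :=
  (MvPolynomial.basisMonomials (Fin m) ℂ).constr ℂ diffOpMonomial

noncomputable def DiffSpan {m : ℕ} (f : MvPolynomial (Fin m) ℂ) :
    Submodule ℂ (MvPolynomial (Fin m) ℂ) :=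
  Submodule.span ℂ (Set.range fun α : Fin m →₀ ℕ => diffOpMonomial α f)

/-- The annihilator `f^⊥` of a polynomial `f`, as a `ℂ`-subspace of the ring of
differential operators (it is in fact an ideal). -/
noncomputable def perp {m : ℕ} (f : MvPolynomial (Fin m) ℂ) :
    Submodule ℂ (MvPolynomial (Fin m) ℂ) :=
  LinearMap.ker (diffAct.flip f)

/-- An ideal `I` is apolar to `F` if `I ⊆ F^⊥`, i.e. every `D ∈ I` annihilates `F`. -/
def IsApolarTo {m : ℕ} (I : Ideal (MvPolynomial (Fin m) ℂ))
    (F : MvPolynomial (Fin m) ℂ) : Prop :=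
  ∀ D ∈ I, diffAct D F = 0

/-- A homogeneous ideal is saturated (with respect to the irrelevant maximal ideal). -/
def IsSaturatedIdeal {m : ℕ} (I : Ideal (MvPolynomial (Fin m) ℂ)) : Prop :=
  ∀ g : MvPolynomial (Fin m) ℂ, (∀ i : Fin m, X i * g ∈ I) → g ∈ I

/-- The Hilbert function of `T/I` in degree `e`: `dim_ℂ (T/I)_e = dim T_e − dim I_e`. -/
noncomputable def hilb {m : ℕ} (I : Ideal (MvPolynomial (Fin m) ℂ)) (e : ℕ) : ℕ :=
  Module.finrank ℂ (homogeneousSubmodule (Fin m) ℂ e) -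
    Module.finrank ℂ
      (Submodule.restrictScalars ℂ I ⊓ homogeneousSubmodule (Fin m) ℂ e :
        Submodule ℂ (MvPolynomial (Fin m) ℂ))

/-- `I` defines a zero-dimensional subscheme of length `r`: it is homogeneous,
saturated, and `dim_ℂ (T/I)_e = r` for all sufficiently large `e`. -/
def DefinesLength {m : ℕ} (I : Ideal (MvPolynomial (Fin m) ℂ)) (r : ℕ) : Prop :=
  (∀ g ∈ I, ∀ j : ℕ, homogeneousComponent j g ∈ I) ∧
  IsSaturatedIdeal I ∧
  ∃ e₀ : ℕ, ∀ e ≥ e₀, hilb I e = r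

/-- The cactus rank of `F`: the minimal length of an apolar zero-dimensional subscheme. -/
noncomputable def cactusRank {m : ℕ} (F : MvPolynomial (Fin m) ℂ) : ℕ :=
  sInf {r : ℕ | ∃ I : Ideal (MvPolynomial (Fin m) ℂ), IsApolarTo I F ∧ DefinesLength I r}

/-- Dehomogenization with respect to `x₀`: `f = F(1, x₁, …, xₙ)`. -/
noncomputable def dehom {n : ℕ} (F : MvPolynomial (Fin (n + 1)) ℂ) :
    MvPolynomial (Fin n) ℂ :=
  aeval (fun i : Fin (n + 1) =>
    Fin.cases (motive := fun _ => MvPolynomial (Fin n) ℂ) 1 (fun j => X j) i) F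

/-- Homogenization with respect to a new variable `y₀`. -/
noncomputable def homogenize {n : ℕ} (g : MvPolynomial (Fin n) ℂ) :
    MvPolynomial (Fin (n + 1)) ℂ :=
  ∑ j ∈ Finset.range (g.totalDegree + 1),
    (X 0 : MvPolynomial (Fin (n + 1)) ℂ) ^ (g.totalDegree - j) *
      rename Fin.succ (homogeneousComponent j g)

/-- `N_d`: `2·C(n+k,k)` if `d = 2k+1`, and `C(n+k,k) + C(n+k+1,k+1)` if `d = 2k+2`. -/
def Nd (n d : ℕ) : ℕ :=
  if d % 2 = 1 then 2 * Nat.choose (n + d / 2) (d / 2)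
  else Nat.choose (n + d / 2 - 1) (d / 2 - 1) + Nat.choose (n + d / 2) (d / 2)

/-! Write `k = d - e`. Since `x₀ ∤ H`, some monomial `x^γ` of `H` avoids `x₀`. In
`G(∂)(x₀^k H)`, the coefficient of `x^γ` only receives a contribution from the term
`y₀^k` of `G`: any other monomial `y^β` of degree `k` has `β₀ < k` and cannot absorb the
factor `x₀^k`. That coefficient is `k! · G_{y₀^k} · H_γ`, so `G_{y₀^k} = 0`. Finally
`G(∂)(x₀^k)` is the constant `k! · G_{y₀^k}`, by the same computation with `H = 1`. -/

theorem Finsupp.eq_single_of_degree_le_apply {σ : Type*} {β : σ →₀ ℕ} {i : σ}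
    (h : β.degree ≤ β i) : β = Finsupp.single i (β i) := by
  have hdeg : (β.erase i).degree = 0 := by
    have := congrArg Finsupp.degree (Finsupp.single_add_erase i β)
    rw [map_add, Finsupp.degree_single] at this
    omega
  calc β = Finsupp.single i (β i) + β.erase i := (Finsupp.single_add_erase i β).symm
    _ = Finsupp.single i (β i) := by rw [(Finsupp.degree_eq_zero_iff _).mp hdeg, add_zero]

namespace MvPolynomial

variable {σ R : Type*} [CommSemiring R]

theorem IsHomogeneous.degree_of_mem_support {k : ℕ} {G : MvPolynomial σ R}
    (hG : G.IsHomogeneous k) {β : σ →₀ ℕ} (hβ : β ∈ G.support) : β.degree = k := by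
  rw [Finsupp.degree_eq_weight_one]
  exact hG (mem_support_iff.mp hβ)

theorem exists_mem_support_apply_eq_zero_of_not_X_dvd {i : σ} {p : MvPolynomial σ R}
    (h : ¬ X i ∣ p) : ∃ γ ∈ p.support, γ i = 0 := by
  contrapose! h
  rw [p.as_sum]
  exact Finset.dvd_sum fun γ hγ => X_dvd_monomial.mpr (Or.inr (h γ hγ))

theorem coeff_pderiv_pow (i : σ) (t : ℕ) (m : σ →₀ ℕ) (p : MvPolynomial σ R) :
    coeff m (((pderiv i).toLinearMap ^ t) p)
      = coeff (m + Finsupp.single i t) p * (m i + 1).ascFactorial t := by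
  induction t generalizing p with
  | zero => simp
  | succ t ih =>
    rw [pow_succ, Module.End.mul_apply, ih, Derivation.coeFn_coe, coeff_pderiv,
      Nat.ascFactorial_succ, add_assoc, ← Finsupp.single_add]
    simp only [Finsupp.add_apply, Finsupp.single_eq_same]
    push_cast
    ring

theorem coeff_list_prod_pderiv_pow [DecidableEq σ] (β : σ →₀ ℕ) {l : List σ}
    (hl : l.Nodup) (m : σ →₀ ℕ) (p : MvPolynomial σ R) :
    coeff m (((l.map fun i => (pderiv i).toLinearMap ^ β i).prod) p)
      = coeff (m + (l.map fun i => Finsupp.single i (β i)).sum) p *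
          (l.map fun i => (m i + 1).ascFactorial (β i)).prod := by
  induction l generalizing m with
  | nil => simp
  | cons a l ih =>
    obtain ⟨ha, hl⟩ := List.nodup_cons.mp hl
    have hmap : l.map (fun i => ((m + Finsupp.single a (β a)) i + 1).ascFactorial (β i))
        = l.map fun i => (m i + 1).ascFactorial (β i) :=
      List.map_congr_left fun i hi => by
        rw [Finsupp.add_apply, Finsupp.single_eq_of_ne (ne_of_mem_of_not_mem hi ha), add_zero]
    rw [List.map_cons, List.prod_cons, Module.End.mul_apply, coeff_pderiv_pow, ih hl, hmap,
      List.map_cons, List.sum_cons, List.map_cons, List.prod_cons, Nat.cast_mul, ← add_assoc]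
    ring

end MvPolynomial

section DifferentialAction

variable {m : ℕ}

theorem coeff_diffOpMonomial (β γ : Fin m →₀ ℕ) (p : MvPolynomial (Fin m) ℂ) :
    coeff γ (diffOpMonomial β p)
      = coeff (γ + β) p * ∏ i, (γ i + 1).ascFactorial (β i) := by
  rw [diffOpMonomial, coeff_list_prod_pderiv_pow β (List.nodup_finRange m),
    ← Fin.prod_univ_def, ← Fin.sum_univ_def, Finsupp.univ_sum_single, Nat.cast_prod]

theorem diffAct_monomial (β : Fin m →₀ ℕ) (c : ℂ) :
    diffAct (monomial β c) = c • diffOpMonomial β := by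
  have hβ : monomial β c = c • basisMonomials (Fin m) ℂ β := by
    rw [coe_basisMonomials, smul_monomial, smul_eq_mul, mul_one]
  rw [hβ, map_smul, diffAct, Module.Basis.constr_basis]

theorem coeff_diffAct (G p : MvPolynomial (Fin m) ℂ) (γ : Fin m →₀ ℕ) :
    coeff γ (diffAct G p) = ∑ β ∈ G.support,
      coeff β G * (coeff (γ + β) p * ∏ i, (γ i + 1).ascFactorial (β i)) := by
  conv_lhs => rw [G.as_sum, map_sum, LinearMap.sum_apply, coeff_sum]
  simp only [diffAct_monomial, LinearMap.smul_apply, coeff_smul, coeff_diffOpMonomial,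
    smul_eq_mul]

theorem MvPolynomial.IsHomogeneous.coeff_diffAct_eq_zero {k : ℕ}
    {G p : MvPolynomial (Fin m) ℂ} (hG : G.IsHomogeneous k) (hp : p.IsHomogeneous k)
    {γ : Fin m →₀ ℕ} (hγ : γ ≠ 0) : coeff γ (diffAct G p) = 0 := by
  rw [coeff_diffAct]
  refine Finset.sum_eq_zero fun β hβ => ?_
  have hdeg : (γ + β).degree ≠ k := by
    rw [map_add, hG.degree_of_mem_support hβ]
    simpa [Finsupp.degree_eq_zero_iff] using hγ
  rw [hp.coeff_eq_zero hdeg, zero_mul, mul_zero]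

theorem coeff_diffAct_X_zero_pow_mul {n k : ℕ} {G : MvPolynomial (Fin (n + 1)) ℂ}
    (hG : G.IsHomogeneous k) (p : MvPolynomial (Fin (n + 1)) ℂ) {γ : Fin (n + 1) →₀ ℕ}
    (hγ : γ 0 = 0) :
    coeff γ (diffAct G (X 0 ^ k * p))
      = coeff (Finsupp.single 0 k) G * (coeff γ p * k.factorial) := by
  rw [coeff_diffAct, X_pow_eq_monomial, Finset.sum_eq_single (Finsupp.single 0 k)]
  · rw [add_comm γ, coeff_monomial_mul, one_mul, Fintype.prod_eq_single 0 fun i hi => by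
      rw [Finsupp.single_eq_of_ne hi, Nat.ascFactorial_zero], Finsupp.single_eq_same, hγ,
      zero_add, Nat.one_ascFactorial]
  · intro β hβ hne
    rw [coeff_monomial_mul', if_neg, zero_mul, mul_zero]
    intro hle
    have hβk := hG.degree_of_mem_support hβ
    have hk : k ≤ β 0 := by simpa [hγ] using hle 0
    have hβ0 := Finsupp.eq_single_of_degree_le_apply (hβk.trans_le hk)
    rw [hβ0, Finsupp.degree_single] at hβk
    exact hne (hβ0.trans (by rw [hβk]))
  · intro hG0
    rw [notMem_support_iff.mp hG0, zero_mul]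
end DifferentialAction

theorem statement1_general {n d e : ℕ} (H : MvPolynomial (Fin (n + 1)) ℂ)
    (hdiv : ¬ (X 0 : MvPolynomial (Fin (n + 1)) ℂ) ∣ H)
    (G : MvPolynomial (Fin (n + 1)) ℂ) (hGhom : G.IsHomogeneous (d - e))
    (hann : diffAct G ((X 0 : MvPolynomial (Fin (n + 1)) ℂ) ^ (d - e) * H) = 0) :
    diffAct G ((X 0 : MvPolynomial (Fin (n + 1)) ℂ) ^ (d - e)) = 0 := by
  obtain ⟨γ, hγH, hγ0⟩ := exists_mem_support_apply_eq_zero_of_not_X_dvd hdiv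
  have hG0 : coeff (Finsupp.single 0 (d - e)) G = 0 := by
    have h := congrArg (coeff γ) hann
    rw [coeff_diffAct_X_zero_pow_mul hGhom H hγ0, coeff_zero] at h
    simpa [Nat.factorial_ne_zero, mem_support_iff.mp hγH] using h
  ext γ'
  rcases eq_or_ne γ' 0 with rfl | hγ'
  · rw [← mul_one (X 0 ^ (d - e)), coeff_diffAct_X_zero_pow_mul hGhom 1 Finsupp.zero_apply,
      hG0, zero_mul, coeff_zero]
  · exact hGhom.coeff_diffAct_eq_zero (isHomogeneous_X_pow _ _) hγ'

/-- Remark 2 of the paper. If `F = x₀^e·H` is homogeneous of degree `d`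
with `H` homogeneous of degree `d − e ≥ 1` not divisible by `x₀`, and `G` is homogeneous
of degree `d − e` with `G(∂)(x₀^{d-e}·H) = 0`, then `G(∂)(x₀^{d-e}) = 0`. -/
theorem statement1 {n d e : ℕ} (F H : MvPolynomial (Fin (n + 1)) ℂ)
    (hFhom : F.IsHomogeneous d)
    (hHhom : H.IsHomogeneous (d - e)) (hde : 1 ≤ d - e)
    (hdiv : ¬ (X 0 : MvPolynomial (Fin (n + 1)) ℂ) ∣ H)
    (hF : F = X 0 ^ e * H)
    (G : MvPolynomial (Fin (n + 1)) ℂ) (hGhom : G.IsHomogeneous (d - e))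
    (hann : diffAct G ((X 0 : MvPolynomial (Fin (n + 1)) ℂ) ^ (d - e) * H) = 0) :
    diffAct G ((X 0 : MvPolynomial (Fin (n + 1)) ℂ) ^ (d - e)) = 0 :=
  statement1_general H hdiv G hGhom hann
end

section
/- Let f ∈ ℂ[x₁,…,xₙ] be a polynomial of degree at most d. Then dim_ℂ Diff(f) ≤ N_d, where N_d = 2·binom(n+k, k) if d = 2k+1 is odd and N_d = binom(n+k, k) + binom(n+k+1, k+1) if d = 2k+2 is even. -/
/-!
Sort the derivatives `∂^α f` by `|α|`. For `|α| ≤ k` they lie in the image of the space of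
operators of degree `≤ k` under `D ↦ D f`, of dimension at most `C(n+k, k)`; for `|α| ≥ k + 1`,
when `deg f ≤ k + m + 1`, they are polynomials of degree `≤ m`, a space of dimension `C(n+m, m)`.
With `k = ⌊(d-1)/2⌋` and `m = ⌊d/2⌋` the sum of the two binomials is `N_d`.
-/

open MvPolynomial

namespace MvPolynomial

section PDeriv

variable {σ R : Type*} [CommSemiring R]

theorem totalDegree_pderiv_le (i : σ) (p : MvPolynomial σ R) :
    (pderiv i p).totalDegree ≤ p.totalDegree - 1 :=
  Finset.sup_le fun s hs => by
    rw [mem_support_iff, coeff_pderiv] at hs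
    have hle := le_totalDegree (mem_support_iff.mpr (left_ne_zero_of_mul hs))
    change (s + Finsupp.single i 1).degree ≤ _ at hle
    rw [map_add, Finsupp.degree_single] at hle
    change s.degree ≤ _
    omega

theorem totalDegree_pderiv_pow_apply_le (i : σ) (e : ℕ) (p : MvPolynomial σ R) :
    (((pderiv i).toLinearMap ^ e) p).totalDegree ≤ p.totalDegree - e := by
  induction e generalizing p with
  | zero => simp
  | succ e ih =>
    rw [pow_succ, Module.End.mul_apply]
    have := totalDegree_pderiv_le i p
    exact (ih _).trans (by simp only [Derivation.coeFn_coe]; omega)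

theorem totalDegree_list_prod_pderiv_pow_apply_le (l : List σ) (α : σ →₀ ℕ)
    (p : MvPolynomial σ R) :
    ((l.map fun i => (pderiv i).toLinearMap ^ α i).prod p).totalDegree ≤
      p.totalDegree - (l.map α).sum := by
  induction l generalizing p with
  | nil => simp
  | cons i l ih =>
    rw [List.map_cons, List.prod_cons, Module.End.mul_apply, List.map_cons, List.sum_cons]
    exact (totalDegree_pderiv_pow_apply_le i _ _).trans (by have := ih p; omega)

end PDeriv

end MvPolynomial

namespace Finsupp

noncomputable def degreeLeEquivDegreeEq (n j : ℕ) :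
    {s : Fin n →₀ ℕ // s.degree ≤ j} ≃ {t : Fin (n + 1) →₀ ℕ // t.degree = j} where
  toFun s := ⟨cons (j - s.1.degree) s.1, by
    rw [degree_eq_sum, Fin.sum_univ_succ]
    simp only [cons_zero, cons_succ, ← degree_eq_sum]
    have := s.2
    omega⟩
  invFun t := ⟨tail t.1, by
    have := t.2
    rw [degree_eq_sum, Fin.sum_univ_succ] at this
    simp only [degree_eq_sum, tail_apply]
    omega⟩
  left_inv s := Subtype.ext (tail_cons _ _)
  right_inv t := Subtype.ext <| by
    have := t.2
    rw [degree_eq_sum, Fin.sum_univ_succ] at this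
    simp only [← tail_apply, ← degree_eq_sum] at this
    simp only [← this, add_tsub_cancel_right, cons_tail]

theorem card_degree_le (n j : ℕ) :
    Nat.card {s : Fin n →₀ ℕ // s.degree ≤ j} = (n + j).choose j := by
  rw [Nat.card_congr ((degreeLeEquivDegreeEq n j).trans (Sym.equivNatSum (Fin (n + 1)) j).symm),
    Nat.card_eq_fintype_card, Sym.card_sym_eq_choose, Fintype.card_fin, Nat.add_right_comm,
    Nat.add_sub_cancel]

end Finsupp

namespace MvPolynomial

theorem finrank_restrictTotalDegree (R : Type*) [CommRing R] [Nontrivial R] (n j : ℕ) :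
    Module.finrank R (restrictTotalDegree (Fin n) R j) = (n + j).choose j :=
  (Module.finrank_eq_nat_card_basis (basisRestrictSupport R _)).trans (Finsupp.card_degree_le n j)

end MvPolynomial

section DiffSpan

variable {n : ℕ}

theorem diffAct_monomial_one (α : Fin n →₀ ℕ) :
    diffAct (monomial α (1 : ℂ)) = diffOpMonomial α :=
  (basisMonomials (Fin n) ℂ).constr_basis ℂ diffOpMonomial α

theorem totalDegree_diffOpMonomial_apply_le (α : Fin n →₀ ℕ) (p : MvPolynomial (Fin n) ℂ) :
    (diffOpMonomial α p).totalDegree ≤ p.totalDegree - α.degree := by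
  rw [Finsupp.degree_eq_sum, Fin.sum_univ_def]
  exact totalDegree_list_prod_pderiv_pow_apply_le _ α p

theorem diffSpan_le_map_sup_restrictTotalDegree {k m : ℕ} (f : MvPolynomial (Fin n) ℂ)
    (hf : f.totalDegree ≤ k + m + 1) :
    DiffSpan f ≤
      (restrictTotalDegree (Fin n) ℂ k).map (diffAct.flip f) ⊔ restrictTotalDegree (Fin n) ℂ m := by
  rw [DiffSpan, Submodule.span_le]
  rintro _ ⟨α, rfl⟩
  by_cases hα : α.degree ≤ k
  · refine Submodule.mem_sup_left ⟨monomial α 1, ?_, ?_⟩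
    · exact (mem_restrictTotalDegree _ _ _).mpr ((totalDegree_monomial_le _ _).trans hα)
    · rw [LinearMap.flip_apply, diffAct_monomial_one]
  · refine Submodule.mem_sup_right ((mem_restrictTotalDegree _ _ _).mpr ?_)
    beta_reduce
    have := totalDegree_diffOpMonomial_apply_le α f
    omega

theorem finrank_diffSpan_le {k m : ℕ} (f : MvPolynomial (Fin n) ℂ)
    (hf : f.totalDegree ≤ k + m + 1) :
    Module.finrank ℂ (DiffSpan f) ≤ (n + k).choose k + (n + m).choose m :=
  calc Module.finrank ℂ (DiffSpan f)
      ≤ Module.finrank ℂ ((restrictTotalDegree (Fin n) ℂ k).map (diffAct.flip f) ⊔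
          restrictTotalDegree (Fin n) ℂ m :) :=
        Submodule.finrank_mono (diffSpan_le_map_sup_restrictTotalDegree f hf)
    _ ≤ Module.finrank ℂ ((restrictTotalDegree (Fin n) ℂ k).map (diffAct.flip f)) +
          Module.finrank ℂ (restrictTotalDegree (Fin n) ℂ m) :=
        Submodule.finrank_add_le_finrank_add_finrank _ _
    _ ≤ (n + k).choose k + (n + m).choose m := by
        rw [finrank_restrictTotalDegree, ← finrank_restrictTotalDegree ℂ n k]
        gcongr
        exact Submodule.finrank_map_le _ _

end DiffSpan

theorem Nd_eq_choose_add_choose (n d : ℕ) :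
    Nd n d = (n + (d - 1) / 2).choose ((d - 1) / 2) + (n + d / 2).choose (d / 2) := by
  rcases Nat.even_or_odd' d with ⟨c, rfl | rfl⟩
  · rcases c with _ | c
    · simp [Nd]
    · rw [Nd, if_neg (by omega), show (2 * (c + 1) - 1) / 2 = c by omega,
        show 2 * (c + 1) / 2 = c + 1 by omega, show n + (c + 1) - 1 = n + c by omega,
        Nat.add_sub_cancel]
  · rw [Nd, if_pos (by omega), show (2 * c + 1 - 1) / 2 = c by omega,
      show (2 * c + 1) / 2 = c by omega, two_mul]

theorem statement4_general {n d : ℕ}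
    (f : MvPolynomial (Fin n) ℂ) (hf : f.totalDegree ≤ d) :
    Module.finrank ℂ (DiffSpan f) ≤ Nd n d :=
  Nd_eq_choose_add_choose n d ▸ finrank_diffSpan_le f (by omega)

/-- For a polynomial `f ∈ ℂ[x₁,…,xₙ]` of degree at most `d ≥ 1`,
`dim_ℂ Diff(f) ≤ N_d`. -/
theorem statement4 {n d : ℕ} (hd : 1 ≤ d)
    (f : MvPolynomial (Fin n) ℂ) (hf : f.totalDegree ≤ d) :
    Module.finrank ℂ (DiffSpan f) ≤ Nd n d :=
  statement4_general f hf
end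

section
/- Let I ⊆ ℂ[y₀,…,yₙ] be a saturated homogeneous ideal defining a zero-dimensional subscheme of length n + 1 that contains no nonzero linear form (I₁ = 0). Then I is generated by its quadratic part I₂, and dim_ℂ I₂ = binom(n+1, 2). -/
/-! Saturation says that no associated prime of `T ⧸ I` contains all the variables. There are
finitely many associated primes and `ℂ` is infinite, so some linear form `ℓ` avoids all of them,
i.e. `ℓ` is a nonzerodivisor on `T ⧸ I`. Multiplication by `ℓ` then embeds `(T ⧸ I)_e` into
`(T ⧸ I)_{e+1}`, so the Hilbert function is nondecreasing; it is `n + 1` in degree `1` (as `I₁ = 0`)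
and in large degrees, hence in every positive degree. This gives
`dim I₂ = C(n+2, 2) - (n+1) = C(n+1, 2)`, and makes `ℓ (T ⧸ I)₁ = (T ⧸ I)₂`, i.e. `T₂ = I₂ + ℓ T₁`.
Multiplying by `T₁` gives `T_{e+1} = (I₂) + ℓ T_e` for `e ≥ 2`, so a form of `I` of degree
`e + 1 ≥ 3` is `g + ℓ h` with `g ∈ (I₂)` and, `ℓ` being regular, `h ∈ I` of degree `e`;
induction on the degree gives `I = (I₂)`. -/

open MvPolynomial

namespace MvPolynomial

section CommRing

variable {R σ : Type*} [CommRing R]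

theorem homogeneousSubmodule_succ_eq_mul (e : ℕ) :
    homogeneousSubmodule σ R (e + 1) = homogeneousSubmodule σ R 1 * homogeneousSubmodule σ R e := by
  rw [← homogeneousSubmodule_one_pow, pow_succ', homogeneousSubmodule_one_pow]

section QuotientGrading

variable (I : Ideal (MvPolynomial σ R))

noncomputable def quotientHomogeneousComponent (e : ℕ) : Submodule R (MvPolynomial σ R ⧸ I) :=
  (homogeneousSubmodule σ R e).map (Ideal.Quotient.mkₐ R I).toLinearMap

variable {I} {ℓ : MvPolynomial σ R}

theorem map_mulLeft_quotientHomogeneousComponent_le (hℓ : ℓ ∈ homogeneousSubmodule σ R 1)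
    (e : ℕ) :
    (quotientHomogeneousComponent I e).map (LinearMap.mulLeft R (Ideal.Quotient.mk I ℓ)) ≤
      quotientHomogeneousComponent I (e + 1) := by
  rintro _ ⟨_, ⟨x, hx, rfl⟩, rfl⟩
  refine ⟨ℓ * x, add_comm 1 e ▸ IsHomogeneous.mul hℓ hx, ?_⟩
  simp

theorem injective_mulLeft_mk (hreg : ∀ x, ℓ * x ∈ I → x ∈ I) :
    Function.Injective (LinearMap.mulLeft R (Ideal.Quotient.mk I ℓ)) := by
  rw [← LinearMap.ker_eq_bot, Submodule.eq_bot_iff]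
  intro y hy
  obtain ⟨x, rfl⟩ := Ideal.Quotient.mk_surjective y
  rw [LinearMap.mem_ker, LinearMap.mulLeft_apply, ← map_mul,
    Ideal.Quotient.eq_zero_iff_mem] at hy
  exact Ideal.Quotient.eq_zero_iff_mem.mpr (hreg x hy)

end QuotientGrading

section Generation

variable {I J : Ideal (MvPolynomial σ R)} {ℓ : MvPolynomial σ R} {d : ℕ}

theorem homogeneousSubmodule_add_le_sup_map_mulLeft
    (hbase : homogeneousSubmodule σ R (d + 1) ≤
      J.restrictScalars R ⊔ (homogeneousSubmodule σ R d).map (LinearMap.mulLeft R ℓ)) (k : ℕ) :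
    homogeneousSubmodule σ R (k + d + 1) ≤
      J.restrictScalars R ⊔ (homogeneousSubmodule σ R (k + d)).map (LinearMap.mulLeft R ℓ) := by
  induction k with
  | zero => simpa using hbase
  | succ k ih =>
    intro f hf
    rw [show k + 1 + d + 1 = k + d + 1 + 1 by omega, homogeneousSubmodule_succ_eq_mul] at hf
    refine Submodule.mul_induction_on hf (fun m hm g hg => ?_) fun _ _ => Submodule.add_mem _
    obtain ⟨j, hj, _, ⟨h, hh, rfl⟩, rfl⟩ := Submodule.mem_sup.mp (ih hg)
    rw [LinearMap.mulLeft_apply, mul_add, mul_left_comm]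
    refine Submodule.add_mem_sup (J.mul_mem_left m hj) ⟨m * h, ?_, rfl⟩
    rw [show k + 1 + d = 1 + (k + d) by omega]
    exact IsHomogeneous.mul hm hh

theorem mem_span_of_mem_homogeneousSubmodule (hreg : ∀ x, ℓ * x ∈ I → x ∈ I)
    (hlow : ∀ j ≤ d, ∀ f ∈ I, f ∈ homogeneousSubmodule σ R j → f = 0)
    (hbase : homogeneousSubmodule σ R (d + 1) ≤
      (I.restrictScalars R ⊓ homogeneousSubmodule σ R (d + 1)) ⊔
        (homogeneousSubmodule σ R d).map (LinearMap.mulLeft R ℓ))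
    (e : ℕ) {f : MvPolynomial σ R} (hfI : f ∈ I) (hf : f ∈ homogeneousSubmodule σ R e) :
    f ∈ Ideal.span {D | D ∈ I ∧ D ∈ homogeneousSubmodule σ R (d + 1)} := by
  set J := Ideal.span {D | D ∈ I ∧ D ∈ homogeneousSubmodule σ R (d + 1)}
  have hJI : J ≤ I := Ideal.span_le.mpr fun D hD => hD.1
  have hbaseJ := hbase.trans (sup_le_sup_right
    (show I.restrictScalars R ⊓ homogeneousSubmodule σ R (d + 1) ≤ J.restrictScalars R from
      fun D hD => Ideal.subset_span hD) _)
  induction e using Nat.strong_induction_on generalizing f with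
  | _ e ih =>
  rcases lt_trichotomy e (d + 1) with he | rfl | he
  · rw [hlow e (by omega) f hfI hf]
    exact J.zero_mem
  · exact Ideal.subset_span ⟨hfI, hf⟩
  · obtain ⟨k, rfl⟩ : ∃ k, e = k + 1 + d + 1 := ⟨e - d - 2, by omega⟩
    obtain ⟨g, hg, _, ⟨h, hh, rfl⟩, rfl⟩ :=
      Submodule.mem_sup.mp (homogeneousSubmodule_add_le_sup_map_mulLeft hbaseJ (k + 1) hf)
    have hhI : h ∈ I := hreg h (by simpa using I.sub_mem hfI (hJI hg))
    exact J.add_mem hg (J.mul_mem_left ℓ (ih _ (by omega) hhI hh))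

theorem eq_span_homogeneousSubmodule (hhom : ∀ g ∈ I, ∀ j, homogeneousComponent j g ∈ I)
    (hreg : ∀ x, ℓ * x ∈ I → x ∈ I)
    (hlow : ∀ j ≤ d, ∀ f ∈ I, f ∈ homogeneousSubmodule σ R j → f = 0)
    (hbase : homogeneousSubmodule σ R (d + 1) ≤
      (I.restrictScalars R ⊓ homogeneousSubmodule σ R (d + 1)) ⊔
        (homogeneousSubmodule σ R d).map (LinearMap.mulLeft R ℓ)) :
    I = Ideal.span {D | D ∈ I ∧ D ∈ homogeneousSubmodule σ R (d + 1)} := by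
  refine le_antisymm (fun f hf => ?_) (Ideal.span_le.mpr fun D hD => hD.1)
  rw [← sum_homogeneousComponent f]
  exact Ideal.sum_mem _ fun j _ => mem_span_of_mem_homogeneousSubmodule hreg hlow hbase j
    (hhom f hf j) (homogeneousComponent_mem j f)

end Generation

end CommRing

section Field

variable {K σ : Type*} [Field K]

instance [Finite σ] (e : ℕ) : FiniteDimensional K (homogeneousSubmodule σ K e) :=
  Module.Finite.iff_fg.mpr (homogeneousSubmodule_fg σ K e)

theorem finrank_homogeneousSubmodule [Fintype σ] (e : ℕ) :
    Module.finrank K (homogeneousSubmodule σ K e) = (Fintype.card σ + e - 1).choose e := by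
  classical
  have hsupport : {d : σ →₀ ℕ | d.degree = e} =
      ((Finset.univ : Finset σ).finsuppAntidiag e : Set (σ →₀ ℕ)) := by
    ext d
    simp [Finset.mem_finsuppAntidiag, Finsupp.degree_eq_sum]
  let b := (basisRestrictSupport K {d : σ →₀ ℕ | d.degree = e}).map
    (LinearEquiv.ofEq _ _ (homogeneousSubmodule_eq_finsupp_supported σ K e).symm)
  rw [Module.finrank_eq_nat_card_basis b, hsupport, Nat.card_coe_set_eq, Set.ncard_coe_finset,
    Finset.card_finsuppAntidiag_nat_eq_choose, Finset.card_univ]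

theorem eq_zero_of_mem_homogeneousSubmodule_zero {I : Ideal (MvPolynomial σ K)} (hI : I ≠ ⊤)
    {f : MvPolynomial σ K} (hfI : f ∈ I) (hf : f ∈ homogeneousSubmodule σ K 0) : f = 0 := by
  rw [homogeneousSubmodule_zero, Submodule.mem_one] at hf
  obtain ⟨c, rfl⟩ := hf
  by_contra hc
  exact hI (Ideal.eq_top_of_isUnit_mem _ hfI (((map_ne_zero _).mp hc).isUnit.map (algebraMap K _)))

section RegularLinearForm

variable {I : Ideal (MvPolynomial σ K)}

theorem exists_X_notMem_of_mem_associatedPrimes [Finite σ]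
    (hsat : ∀ g, (∀ i, X i * g ∈ I) → g ∈ I) {p : Ideal (MvPolynomial σ K)}
    (hp : p ∈ associatedPrimes (MvPolynomial σ K) (MvPolynomial σ K ⧸ I)) :
    ∃ i, X i ∉ p := by
  obtain ⟨hprime, x', rfl⟩ := isAssociatedPrime_iff.mp hp
  obtain ⟨x, rfl⟩ := Ideal.Quotient.mk_surjective x'
  by_contra! hX
  have hx : x ∈ I := hsat x fun i => by
    rw [← Ideal.Quotient.eq_zero_iff_mem, map_mul]
    exact Submodule.mem_colon_singleton.mp (hX i)
  apply hprime.ne_top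
  rw [Ideal.Quotient.eq_zero_iff_mem.mpr hx, Submodule.colon_singleton_zero]

theorem exists_mem_homogeneousSubmodule_one_forall_notMem [Infinite K]
    {s : Set (Ideal (MvPolynomial σ K))} (hs : s.Finite) (h : ∀ p ∈ s, ∃ i, X i ∉ p) :
    ∃ ℓ ∈ homogeneousSubmodule σ K 1, ∀ p ∈ s, ℓ ∉ p := by
  by_contra! hcover
  have := hs.to_subtype
  obtain ⟨⟨p, hp⟩, htop⟩ := Subspace.exists_eq_top_of_iUnion_eq_univ
    (p := fun p : s => (p.1.restrictScalars K).comap (homogeneousSubmodule σ K 1).subtype)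
    (Set.eq_univ_of_forall fun ℓ => by
      obtain ⟨p, hp, hℓp⟩ := hcover ℓ ℓ.2
      exact Set.mem_iUnion.mpr ⟨⟨p, hp⟩, hℓp⟩)
  obtain ⟨i, hi⟩ := h p hp
  have hXi : (⟨X i, isHomogeneous_X K i⟩ : homogeneousSubmodule σ K 1) ∈
      (p.restrictScalars K).comap (homogeneousSubmodule σ K 1).subtype := htop ▸ trivial
  exact hi hXi

theorem exists_regular_linear_form [Infinite K] [Finite σ]
    (hsat : ∀ g, (∀ i, X i * g ∈ I) → g ∈ I) :
    ∃ ℓ ∈ homogeneousSubmodule σ K 1, ∀ x, ℓ * x ∈ I → x ∈ I := by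
  obtain ⟨ℓ, hℓ, havoid⟩ := exists_mem_homogeneousSubmodule_one_forall_notMem
    (associatedPrimes.finite _ _) fun p hp => exists_X_notMem_of_mem_associatedPrimes hsat hp
  refine ⟨ℓ, hℓ, fun x hx => by_contra fun hxI => ?_⟩
  have hzd : ℓ ∈ {r | ∃ y : MvPolynomial σ K ⧸ I, y ≠ 0 ∧ r • y = 0} :=
    ⟨Ideal.Quotient.mk I x, by simpa [Ideal.Quotient.eq_zero_iff_mem] using hxI, by
      rwa [← Ideal.Quotient.eq_zero_iff_mem, map_mul] at hx⟩
  rw [← biUnion_associatedPrimes_eq_zero_divisors, Set.mem_iUnion₂] at hzd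
  obtain ⟨p, hp, hℓp⟩ := hzd
  exact havoid p hp hℓp

end RegularLinearForm

section QuotientGrading

variable (I : Ideal (MvPolynomial σ K))

instance [Finite σ] (e : ℕ) : FiniteDimensional K (quotientHomogeneousComponent I e) :=
  Module.Finite.map _ _

theorem finrank_quotientHomogeneousComponent_add [Finite σ] (e : ℕ) :
    Module.finrank K (quotientHomogeneousComponent I e) +
      Module.finrank K (I.restrictScalars K ⊓ homogeneousSubmodule σ K e :
        Submodule K (MvPolynomial σ K)) =
      Module.finrank K (homogeneousSubmodule σ K e) := by
  set f := (Ideal.Quotient.mkₐ K I).toLinearMap.domRestrict (homogeneousSubmodule σ K e)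
  have hker : LinearMap.ker f = (I.restrictScalars K ⊓ homogeneousSubmodule σ K e).comap
      (homogeneousSubmodule σ K e).subtype := by
    ext x
    simp [f, LinearMap.ker_domRestrict, Ideal.Quotient.eq_zero_iff_mem]
  rw [← LinearMap.finrank_range_add_finrank_ker f, LinearMap.range_domRestrict, hker,
    (Submodule.comapSubtypeEquivOfLe inf_le_right).finrank_eq]
  rfl

variable {I} {ℓ : MvPolynomial σ K}

theorem finrank_quotientHomogeneousComponent_le_succ [Finite σ]
    (hℓ : ℓ ∈ homogeneousSubmodule σ K 1) (hreg : ∀ x, ℓ * x ∈ I → x ∈ I) (e : ℕ) :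
    Module.finrank K (quotientHomogeneousComponent I e) ≤
      Module.finrank K (quotientHomogeneousComponent I (e + 1)) := by
  rw [(Submodule.equivMapOfInjective _ (injective_mulLeft_mk hreg) _).finrank_eq]
  exact Submodule.finrank_mono (map_mulLeft_quotientHomogeneousComponent_le hℓ e)

theorem homogeneousSubmodule_succ_le_of_finrank_eq [Finite σ]
    (hℓ : ℓ ∈ homogeneousSubmodule σ K 1) (hreg : ∀ x, ℓ * x ∈ I → x ∈ I) (e : ℕ)
    (h : Module.finrank K (quotientHomogeneousComponent I e) =
      Module.finrank K (quotientHomogeneousComponent I (e + 1))) :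
    homogeneousSubmodule σ K (e + 1) ≤
      (I.restrictScalars K ⊓ homogeneousSubmodule σ K (e + 1)) ⊔
        (homogeneousSubmodule σ K e).map (LinearMap.mulLeft K ℓ) := by
  have honto := Submodule.eq_of_le_of_finrank_eq
    (map_mulLeft_quotientHomogeneousComponent_le hℓ e)
    ((Submodule.equivMapOfInjective _ (injective_mulLeft_mk hreg) _).finrank_eq.symm.trans h)
  intro y hy
  obtain ⟨_, ⟨x, hx, rfl⟩, hxy⟩ : Ideal.Quotient.mk I y ∈
      (quotientHomogeneousComponent I e).map (LinearMap.mulLeft K (Ideal.Quotient.mk I ℓ)) :=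
    honto ▸ ⟨y, hy, rfl⟩
  have hℓx : ℓ * x ∈ homogeneousSubmodule σ K (e + 1) := add_comm 1 e ▸ IsHomogeneous.mul hℓ hx
  refine Submodule.mem_sup.mpr ⟨y - ℓ * x, ⟨?_, Submodule.sub_mem _ hy hℓx⟩, ℓ * x, ⟨x, hx, rfl⟩,
    sub_add_cancel _ _⟩
  change y - ℓ * x ∈ I
  rw [← Ideal.Quotient.eq_zero_iff_mem, map_sub, map_mul, ← hxy]
  simp

end QuotientGrading

end Field

end MvPolynomial

theorem Monotone.eq_of_le_of_eventually_eq {α : Type*} [PartialOrder α] {f : ℕ → α}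
    (hf : Monotone f) {a e₀ : ℕ} {r : α} (ha : f a = r) (hstab : ∀ e ≥ e₀, f e = r) {e : ℕ}
    (he : a ≤ e) : f e = r :=
  le_antisymm ((hf (le_max_left e e₀)).trans (hstab _ (le_max_right e e₀)).le) (ha ▸ hf he)

section Hilbert

variable {m : ℕ} {I : Ideal (MvPolynomial (Fin m) ℂ)}

theorem finrank_inf_homogeneousSubmodule_add_hilb (e : ℕ) :
    Module.finrank ℂ (I.restrictScalars ℂ ⊓ homogeneousSubmodule (Fin m) ℂ e :
      Submodule ℂ (MvPolynomial (Fin m) ℂ)) + hilb I e =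
      Module.finrank ℂ (homogeneousSubmodule (Fin m) ℂ e) :=
  Nat.add_sub_cancel' (Submodule.finrank_mono inf_le_right)

theorem hilb_eq_finrank_quotientHomogeneousComponent (e : ℕ) :
    hilb I e = Module.finrank ℂ (quotientHomogeneousComponent I e) := by
  have := finrank_quotientHomogeneousComponent_add I e
  have := finrank_inf_homogeneousSubmodule_add_hilb (I := I) e
  omega

theorem monotone_hilb {ℓ : MvPolynomial (Fin m) ℂ} (hℓ : ℓ ∈ homogeneousSubmodule (Fin m) ℂ 1)
    (hreg : ∀ x, ℓ * x ∈ I → x ∈ I) : Monotone (hilb I) :=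
  monotone_nat_of_le_succ fun e => by
    simpa only [hilb_eq_finrank_quotientHomogeneousComponent] using
      finrank_quotientHomogeneousComponent_le_succ hℓ hreg e

theorem hilb_one_of_forall_linear_eq_zero
    (hlin : ∀ D ∈ I, D ∈ homogeneousSubmodule (Fin m) ℂ 1 → D = 0) : hilb I 1 = m := by
  have hI1 : (I.restrictScalars ℂ ⊓ homogeneousSubmodule (Fin m) ℂ 1 :
      Submodule ℂ (MvPolynomial (Fin m) ℂ)) = ⊥ :=
    eq_bot_iff.mpr fun D hD => hlin D hD.1 hD.2
  rw [hilb, hI1, finrank_bot, finrank_homogeneousSubmodule]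
  simp

theorem ne_top_of_hilb_ne_zero {e : ℕ} (h : hilb I e ≠ 0) : I ≠ ⊤ := by
  rintro rfl
  rw [hilb, Submodule.restrictScalars_top, top_inf_eq, Nat.sub_self] at h
  exact h rfl

end Hilbert

/-- A saturated homogeneous ideal defining a zero-dimensional subscheme
of length `n + 1` with no nonzero linear form is generated by its quadratic part `I₂`,
and `dim_ℂ I₂ = C(n+1, 2)`. -/
theorem statement10 {n : ℕ} (I : Ideal (MvPolynomial (Fin (n + 1)) ℂ))
    (hlen : DefinesLength I (n + 1))
    (hlin : ∀ D ∈ I, D ∈ homogeneousSubmodule (Fin (n + 1)) ℂ 1 → D = 0) :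
    I = Ideal.span {D : MvPolynomial (Fin (n + 1)) ℂ |
        D ∈ I ∧ D ∈ homogeneousSubmodule (Fin (n + 1)) ℂ 2} ∧
    Module.finrank ℂ
      (Submodule.restrictScalars ℂ I ⊓ homogeneousSubmodule (Fin (n + 1)) ℂ 2 :
        Submodule ℂ (MvPolynomial (Fin (n + 1)) ℂ)) = Nat.choose (n + 1) 2 := by
  obtain ⟨hhom, hsat, e₀, hstab⟩ := hlen
  obtain ⟨ℓ, hℓ, hreg⟩ := exists_regular_linear_form hsat
  have hilb_one := hilb_one_of_forall_linear_eq_zero hlin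
  have hilb_two : hilb I 2 = n + 1 :=
    (monotone_hilb hℓ hreg).eq_of_le_of_eventually_eq hilb_one hstab one_le_two
  have hI : I ≠ ⊤ := ne_top_of_hilb_ne_zero (e := e₀) (by rw [hstab e₀ le_rfl]; omega)
  have hlow : ∀ j ≤ 1, ∀ f ∈ I, f ∈ homogeneousSubmodule (Fin (n + 1)) ℂ j → f = 0 := by
    intro j hj f hfI hf
    interval_cases j
    · exact eq_zero_of_mem_homogeneousSubmodule_zero hI hfI hf
    · exact hlin f hfI hf
  have hbase := homogeneousSubmodule_succ_le_of_finrank_eq hℓ hreg 1 (by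
    simp only [← hilb_eq_finrank_quotientHomogeneousComponent, hilb_one, hilb_two])
  refine ⟨eq_span_homogeneousSubmodule hhom hreg hlow hbase, ?_⟩
  have hdim := finrank_inf_homogeneousSubmodule_add_hilb (I := I) 2
  have hpascal : (n + 2).choose 2 = (n + 1).choose 2 + (n + 1) := by
    rw [Nat.choose_succ_succ, Nat.choose_one_right, add_comm]
  rw [hilb_two, finrank_homogeneousSubmodule, Fintype.card_fin,
    show n + 1 + 2 - 1 = n + 2 by omega, hpascal] at hdim
  exact Nat.add_right_cancel hdim
end

section
/- Let m ≥ 1, let G ∈ ℂ[x₁,…,x_m] be a homogeneous cubic form with first-order partial derivatives G_i = ∂G/∂x_i for i = 1,…,m, and let f = G + x₁x_{m+1} + ⋯ + x_m x_{2m} + x_{2m+1} ∈ ℂ[x₁,…,x_{2m+1}]. Then Diff(f) is the ℂ-linear span of the 2m+2 linearly independent polynomials f, G₁ + x_{m+1}, …, G_m + x_{2m}, x₁, …, x_m, 1; in particular dim_ℂ Diff(f) = 2m + 2. -/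
open MvPolynomial

/-- Embedding of the index of `x_i` (`i = 1,…,m`) into `Fin (2m+1)` (variables
`x₁,…,x_{2m+1}`, with `x_{j+1}` corresponding to index `j`). -/
def emb1 (m : ℕ) (i : Fin m) : Fin (2 * m + 1) := ⟨i.val, by have := i.isLt; omega⟩

/-- Embedding of the index of `x_{m+i}` (`i = 1,…,m`) into `Fin (2m+1)`. -/
def emb2 (m : ℕ) (i : Fin m) : Fin (2 * m + 1) := ⟨m + i.val, by have := i.isLt; omega⟩

/-- The index of the last variable `x_{2m+1}` in `Fin (2m+1)`. -/
def lastVar (m : ℕ) : Fin (2 * m + 1) := ⟨2 * m, by omega⟩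

/-- `f = G + x₁x_{m+1} + ⋯ + x_m x_{2m} + x_{2m+1} ∈ ℂ[x₁,…,x_{2m+1}]`. -/
noncomputable def fpoly (m : ℕ) (G : MvPolynomial (Fin m) ℂ) :
    MvPolynomial (Fin (2 * m + 1)) ℂ :=
  rename (emb1 m) G + (∑ i : Fin m, X (emb1 m i) * X (emb2 m i)) + X (lastVar m)

/-- The family of `2m + 2` polynomials `f, G₁ + x_{m+1}, …, G_m + x_{2m}, x₁, …, x_m, 1`. -/
noncomputable def fam (m : ℕ) (G : MvPolynomial (Fin m) ℂ) :
    Unit ⊕ Fin m ⊕ Fin m ⊕ Unit → MvPolynomial (Fin (2 * m + 1)) ℂ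
  | Sum.inl _ => fpoly m G
  | Sum.inr (Sum.inl i) => rename (emb1 m) (pderiv i G) + X (emb2 m i)
  | Sum.inr (Sum.inr (Sum.inl i)) => X (emb1 m i)
  | Sum.inr (Sum.inr (Sum.inr _)) => 1


/-!
The first partials of `f` are `∂f/∂xᵢ = Gᵢ + x_{m+i}`, `∂f/∂x_{m+i} = xᵢ` and
`∂f/∂x_{2m+1} = 1`, so the family consists of `f` and its first partials. Differentiating
once more only produces second partials of the cubic `G`, which are linear forms in
`x₁, …, x_m`, and constants; hence the span of the family is stable under every `∂ⱼ` and is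
`Diff(f)`. Linear independence is read off the parts of degree `≤ 1`: these are
`x_{2m+1}, x_{m+i}, xᵢ, 1`, since `G` and `∑ xᵢ x_{m+i}` have no terms of degree `≤ 1`.
-/

section DiffSpan

variable {n : ℕ}

lemma diffOpMonomial_zero : diffOpMonomial (0 : Fin n →₀ ℕ) = 1 :=
  List.prod_eq_one (by simp)

lemma diffOpMonomial_single (j : Fin n) :
    diffOpMonomial (Finsupp.single j 1) = (pderiv j).toLinearMap := by
  classical
  rw [diffOpMonomial, List.prod_map_eq_pow_single j _ (fun i hij _ => by simp [hij.symm]),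
    List.count_finRange]
  simp

lemma self_mem_diffSpan (f : MvPolynomial (Fin n) ℂ) : f ∈ DiffSpan f :=
  Submodule.subset_span ⟨0, by simp [diffOpMonomial_zero]⟩

lemma pderiv_mem_diffSpan (f : MvPolynomial (Fin n) ℂ) (j : Fin n) :
    pderiv j f ∈ DiffSpan f :=
  Submodule.subset_span ⟨Finsupp.single j 1, by simp [diffOpMonomial_single]⟩

lemma mapsTo_diffOpMonomial {T : Submodule ℂ (MvPolynomial (Fin n) ℂ)}
    (hT : ∀ i, Set.MapsTo (pderiv i) (T : Set (MvPolynomial (Fin n) ℂ)) T) (α : Fin n →₀ ℕ) :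
    Set.MapsTo (diffOpMonomial α) T T := by
  refine List.prod_induction (fun D : Module.End ℂ (MvPolynomial (Fin n) ℂ) => Set.MapsTo D T T)
    (fun _ _ hD hE => hD.comp hE) (Set.mapsTo_id _) ?_
  simp only [List.mem_map]
  rintro _ ⟨i, -, rfl⟩
  rw [Module.End.coe_pow]
  exact (hT i).iterate _

lemma diffSpan_le_of_mapsTo_pderiv {f : MvPolynomial (Fin n) ℂ}
    {T : Submodule ℂ (MvPolynomial (Fin n) ℂ)} (hf : f ∈ T)
    (hT : ∀ i, Set.MapsTo (pderiv i) (T : Set (MvPolynomial (Fin n) ℂ)) T) : DiffSpan f ≤ T :=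
  Submodule.span_le.mpr <| Set.range_subset_iff.mpr fun α => mapsTo_diffOpMonomial hT α hf

end DiffSpan

namespace MvPolynomial

variable {σ τ R : Type*} [CommSemiring R]

lemma pderiv_rename_of_notMem_range {f : σ → τ} {j : τ} (hj : j ∉ Set.range f)
    (p : MvPolynomial σ R) : pderiv j (rename f p) = 0 :=
  pderiv_eq_zero_of_notMem_vars fun h =>
    let ⟨i, _, hi⟩ := mem_vars_rename f p h
    hj ⟨i, hi⟩

lemma IsHomogeneous.rename_mem_span_X {p : MvPolynomial σ R} (hp : p.IsHomogeneous 1)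
    (f : σ → τ) : rename f p ∈ Submodule.span R (Set.range (X ∘ f)) := by
  rw [← mem_homogeneousSubmodule, homogeneousSubmodule_one_eq_span_X] at hp
  have := Submodule.mem_map_of_mem (f := (rename f).toLinearMap) hp
  simpa [Submodule.map_span, ← Set.range_comp, Function.comp_def] using this

noncomputable def affinePart : MvPolynomial σ R →ₗ[R] MvPolynomial σ R :=
  homogeneousComponent 0 + homogeneousComponent 1

lemma affinePart_of_isHomogeneous {p : MvPolynomial σ R} {n : ℕ} (hp : p.IsHomogeneous n)
    (hn : 2 ≤ n) : affinePart p = 0 := by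
  simp [affinePart, homogeneousComponent_of_mem hp, show 0 ≠ n by omega, show 1 ≠ n by omega]

lemma affinePart_X (i : σ) : affinePart (X i : MvPolynomial σ R) = X i := by
  simp [affinePart, homogeneousComponent_of_mem (isHomogeneous_X R i)]

lemma affinePart_one : affinePart (1 : MvPolynomial σ R) = 1 := by
  simp [affinePart, homogeneousComponent_of_mem (isHomogeneous_one σ R)]

lemma linearIndependent_option_elim_one_X [Nontrivial R] :
    LinearIndependent R (fun o : Option σ => o.elim (1 : MvPolynomial σ R) X) := by
  let e : Option σ → σ →₀ ℕ := fun o => o.elim 0 (Finsupp.single · 1)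
  have he : Function.Injective e := by
    rintro (_ | i) (_ | j) h <;>
      simp_all [e, Finsupp.single_left_inj, eq_comm (a := (0 : σ →₀ ℕ))]
  convert (basisMonomials σ R).linearIndependent.comp e he using 1
  funext o
  cases o <;> simp [e, coe_basisMonomials, X]

end MvPolynomial

section Embeddings

variable {m : ℕ}

lemma emb1_injective : Function.Injective (emb1 m) := by
  intro i j h; simpa [emb1, Fin.ext_iff] using h

lemma emb2_injective : Function.Injective (emb2 m) := by
  intro i j h; simpa [emb2, Fin.ext_iff] using h

lemma emb1_ne_emb2 (i j : Fin m) : emb1 m i ≠ emb2 m j := by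
  simp only [emb1, emb2, ne_eq, Fin.ext_iff]; omega

lemma emb1_ne_lastVar (i : Fin m) : emb1 m i ≠ lastVar m := by
  simp only [emb1, lastVar, ne_eq, Fin.ext_iff]; omega

lemma emb2_ne_lastVar (i : Fin m) : emb2 m i ≠ lastVar m := by
  simp only [emb2, lastVar, ne_eq, Fin.ext_iff]; omega

lemma emb2_notMem_range_emb1 (i : Fin m) : emb2 m i ∉ Set.range (emb1 m) := by
  rintro ⟨j, h⟩; exact emb1_ne_emb2 j i h

lemma lastVar_notMem_range_emb1 : lastVar m ∉ Set.range (emb1 m) := by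
  rintro ⟨j, h⟩; exact emb1_ne_lastVar j h

lemma exists_emb1_or_exists_emb2_or_lastVar (j : Fin (2 * m + 1)) :
    (∃ i, j = emb1 m i) ∨ (∃ i, j = emb2 m i) ∨ j = lastVar m := by
  obtain ⟨j, hj⟩ := j
  by_cases h1 : j < m
  · exact Or.inl ⟨⟨j, h1⟩, rfl⟩
  by_cases h2 : j < 2 * m
  · exact Or.inr <| Or.inl ⟨⟨j - m, by omega⟩, by simp only [emb2, Fin.mk.injEq]; omega⟩
  · exact Or.inr <| Or.inr <| by simp only [lastVar, Fin.mk.injEq]; omega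

end Embeddings

section FirstPartials

variable {m : ℕ} (G : MvPolynomial (Fin m) ℂ)

lemma pderiv_fpoly_emb1 (i : Fin m) :
    pderiv (emb1 m i) (fpoly m G) = rename (emb1 m) (pderiv i G) + X (emb2 m i) := by
  classical
  simp [fpoly, pderiv_rename emb1_injective, pderiv_X, Pi.single_apply, emb1_injective.eq_iff,
    emb1_ne_emb2, emb1_ne_lastVar]

lemma pderiv_fpoly_emb2 (i : Fin m) : pderiv (emb2 m i) (fpoly m G) = X (emb1 m i) := by
  classical
  simp [fpoly, pderiv_rename_of_notMem_range (emb2_notMem_range_emb1 i), pderiv_X,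
    Pi.single_apply, emb2_injective.eq_iff, emb1_ne_emb2, emb2_ne_lastVar]

lemma pderiv_fpoly_lastVar : pderiv (lastVar m) (fpoly m G) = 1 := by
  classical
  simp [fpoly, pderiv_rename_of_notMem_range lastVar_notMem_range_emb1, pderiv_X,
    emb1_ne_lastVar, emb2_ne_lastVar]

end FirstPartials

section SpanOfFam

variable {m : ℕ} (G : MvPolynomial (Fin m) ℂ)

local notation "S" => Submodule.span ℂ (Set.range (fam m G))

lemma span_fam_le_diffSpan : S ≤ DiffSpan (fpoly m G) := by
  refine Submodule.span_le.mpr <| Set.range_subset_iff.mpr ?_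
  rintro (_ | i | i | _)
  · exact self_mem_diffSpan _
  · rw [fam, ← pderiv_fpoly_emb1]
    exact pderiv_mem_diffSpan _ _
  · rw [fam, ← pderiv_fpoly_emb2]
    exact pderiv_mem_diffSpan _ _
  · rw [fam, ← pderiv_fpoly_lastVar]
    exact pderiv_mem_diffSpan _ _

lemma pderiv_X_mem_span_fam (j a : Fin (2 * m + 1)) : pderiv j (X a) ∈ S := by
  by_cases h : a = j
  · rw [h, pderiv_X_self]
    exact Submodule.subset_span ⟨Sum.inr (Sum.inr (Sum.inr ())), rfl⟩
  · rw [pderiv_X_of_ne h]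
    exact Submodule.zero_mem _

lemma pderiv_rename_quadratic_mem_span_fam {p : MvPolynomial (Fin m) ℂ} (hp : p.IsHomogeneous 2)
    (j : Fin (2 * m + 1)) : pderiv j (rename (emb1 m) p) ∈ S := by
  by_cases hj : j ∈ Set.range (emb1 m)
  · obtain ⟨k, rfl⟩ := hj
    rw [pderiv_rename emb1_injective]
    refine Submodule.span_mono ?_ (hp.pderiv.rename_mem_span_X (emb1 m))
    rintro _ ⟨i, rfl⟩
    exact ⟨Sum.inr (Sum.inr (Sum.inl i)), rfl⟩
  · rw [pderiv_rename_of_notMem_range hj]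
    exact Submodule.zero_mem _

variable {G}

lemma pderiv_fam_mem_span_fam (hG : G.IsHomogeneous 3) (j : Fin (2 * m + 1))
    (k : Unit ⊕ Fin m ⊕ Fin m ⊕ Unit) : pderiv j (fam m G k) ∈ S := by
  rcases k with _ | i | i | _
  · rcases exists_emb1_or_exists_emb2_or_lastVar j with ⟨i, rfl⟩ | ⟨i, rfl⟩ | rfl
    · exact pderiv_fpoly_emb1 G i ▸ Submodule.subset_span ⟨Sum.inr (Sum.inl i), rfl⟩
    · exact pderiv_fpoly_emb2 G i ▸ Submodule.subset_span ⟨Sum.inr (Sum.inr (Sum.inl i)), rfl⟩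
    · exact pderiv_fpoly_lastVar G ▸ Submodule.subset_span ⟨Sum.inr (Sum.inr (Sum.inr ())), rfl⟩
  · rw [fam, map_add]
    exact Submodule.add_mem _ (pderiv_rename_quadratic_mem_span_fam G hG.pderiv j)
      (pderiv_X_mem_span_fam G j _)
  · exact pderiv_X_mem_span_fam G j _
  · rw [fam, pderiv_one]
    exact Submodule.zero_mem _

lemma mapsTo_pderiv_span_fam (hG : G.IsHomogeneous 3) (j : Fin (2 * m + 1)) :
    Set.MapsTo (pderiv j) (S : Set (MvPolynomial (Fin (2 * m + 1)) ℂ)) S := by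
  have : S ≤ Submodule.comap (pderiv j).toLinearMap S :=
    Submodule.span_le.mpr <| Set.range_subset_iff.mpr (pderiv_fam_mem_span_fam hG j)
  exact fun _ hp => this hp

end SpanOfFam

section LinearIndependence

variable {m : ℕ} {G : MvPolynomial (Fin m) ℂ}

def famVar (m : ℕ) : Unit ⊕ Fin m ⊕ Fin m ⊕ Unit → Option (Fin (2 * m + 1))
  | Sum.inl _ => some (lastVar m)
  | Sum.inr (Sum.inl i) => some (emb2 m i)
  | Sum.inr (Sum.inr (Sum.inl i)) => some (emb1 m i)
  | Sum.inr (Sum.inr (Sum.inr _)) => none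

lemma famVar_injective : Function.Injective (famVar m) := by
  rintro (_ | i | i | _) (_ | j | j | _) h <;>
    simp_all [famVar, emb1_injective.eq_iff, emb2_injective.eq_iff, emb1_ne_emb2,
      emb1_ne_lastVar, emb2_ne_lastVar, (emb1_ne_emb2 _ _).symm, (emb1_ne_lastVar _).symm,
      (emb2_ne_lastVar _).symm]

lemma affinePart_fam (hG : G.IsHomogeneous 3) (k : Unit ⊕ Fin m ⊕ Fin m ⊕ Unit) :
    affinePart (fam m G k) = (famVar m k).elim 1 X := by
  have hquad : (∑ i : Fin m, X (emb1 m i) * X (emb2 m i) :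
      MvPolynomial (Fin (2 * m + 1)) ℂ).IsHomogeneous 2 :=
    IsHomogeneous.sum _ _ _ fun i _ => (isHomogeneous_X ℂ _).mul (isHomogeneous_X ℂ _)
  rcases k with _ | i | i | _
  · simp [fam, fpoly, famVar, affinePart_X,
      affinePart_of_isHomogeneous hG.rename_isHomogeneous (by norm_num),
      affinePart_of_isHomogeneous hquad le_rfl]
  · simp [fam, famVar, affinePart_X,
      affinePart_of_isHomogeneous hG.pderiv.rename_isHomogeneous (by norm_num)]
  · exact affinePart_X _
  · exact affinePart_one

lemma linearIndependent_fam (hG : G.IsHomogeneous 3) : LinearIndependent ℂ (fam m G) := by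
  refine LinearIndependent.of_comp affinePart ?_
  rw [show affinePart ∘ fam m G = (fun o => o.elim 1 X) ∘ famVar m from funext (affinePart_fam hG)]
  exact linearIndependent_option_elim_one_X.comp _ famVar_injective

end LinearIndependence

theorem statement15_general {m : ℕ}
    (G : MvPolynomial (Fin m) ℂ) (hG : G.IsHomogeneous 3) :
    LinearIndependent ℂ (fam m G) ∧
    DiffSpan (fpoly m G) = Submodule.span ℂ (Set.range (fam m G)) ∧
    Module.finrank ℂ (DiffSpan (fpoly m G)) = 2 * m + 2 := by
  have hspan : DiffSpan (fpoly m G) = Submodule.span ℂ (Set.range (fam m G)) :=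
    le_antisymm
      (diffSpan_le_of_mapsTo_pderiv (Submodule.subset_span ⟨Sum.inl (), rfl⟩)
        (mapsTo_pderiv_span_fam hG))
      (span_fam_le_diffSpan G)
  refine ⟨linearIndependent_fam hG, hspan, ?_⟩
  rw [hspan, finrank_span_eq_card (linearIndependent_fam hG)]
  simp only [Fintype.card_sum, Fintype.card_unit, Fintype.card_fin]
  ring

/-- For `f = G + x₁x_{m+1} + ⋯ + x_m x_{2m} + x_{2m+1}` with `G` a
homogeneous cubic in `x₁,…,x_m`, `Diff(f)` is the span of the `2m+2` linearly
independent polynomials `f, G₁ + x_{m+1}, …, G_m + x_{2m}, x₁, …, x_m, 1`; in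
particular `dim_ℂ Diff(f) = 2m + 2`. -/
theorem statement15 {m : ℕ} (hm : 1 ≤ m)
    (G : MvPolynomial (Fin m) ℂ) (hG : G.IsHomogeneous 3) :
    LinearIndependent ℂ (fam m G) ∧
    DiffSpan (fpoly m G) = Submodule.span ℂ (Set.range (fam m G)) ∧
    Module.finrank ℂ (DiffSpan (fpoly m G)) = 2 * m + 2 :=
  statement15_general G hG
end
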